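/- Every non-abelian group of order 27 has a narcissistic terrace and also a directed half-and-half terrace. -/

import Mathlib

/-- The list of successive quotients `aᵢ⁻¹ * aᵢ₊₁` of a list of group elements. -/
def succQuots {G : Type*} [Group G] (l : List G) : List G :=
  List.zipWith (fun x y => x⁻¹ * y) l l.tail

/-- A list is an arrangement of the elements of `G` if it lists every element exactly once. -/
def IsArrangement {G : Type*} (l : List G) : Prop :=
  l.Nodup ∧ ∀ g : G, g ∈ l

open scoped Classical in
/-- A terrace: an arrangement whose list of successive quotients contains each involution
exactly once and, for each `x` with `x ^ 2 ≠ 1`, contains `x` and `x⁻¹` twice in total. -/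
def IsTerrace {G : Type*} [Group G] (l : List G) : Prop :=
  IsArrangement l ∧
  (∀ z : G, z ≠ 1 → z ^ 2 = 1 → (succQuots l).count z = 1) ∧
  (∀ x : G, x ^ 2 ≠ 1 → (succQuots l).count x + (succQuots l).count x⁻¹ = 2)

open scoped Classical in
/-- A half-and-half terrace (for a group of odd order n): a terrace such that for each
`x` with `x ^ 2 ≠ 1`, exactly one of b₁, …, b₍ₙ₋₁₎/₂ lies in {x, x⁻¹}. -/
def IsHalfAndHalfTerrace {G : Type*} [Group G] (l : List G) : Prop :=
  IsTerrace l ∧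
  ∀ x : G, x ^ 2 ≠ 1 →
    ((succQuots l).take ((l.length - 1) / 2)).count x +
      ((succQuots l).take ((l.length - 1) / 2)).count x⁻¹ = 1

/-- A directed half-and-half terrace: a half-and-half terrace whose successive quotients
are pairwise distinct. -/
def IsDirectedHalfAndHalfTerrace {G : Type*} [Group G] (l : List G) : Prop :=
  IsHalfAndHalfTerrace l ∧ (succQuots l).Nodup

/-- A narcissistic terrace: a terrace whose 2-sequencing is reflective, i.e. equal to
its own reverse (bᵢ = bₙ₋ᵢ for all i). -/
def IsNarcissisticTerrace {G : Type*} [Group G] (l : List G) : Prop :=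
  IsTerrace l ∧ succQuots l = (succQuots l).reverse

/-!
A non-abelian group `G` of order `27` has centre `Z` of order `3`, and `G ⧸ Z` is abelian of
exponent `3`. Hence for non-commuting `a, b` the commutator `c = ⁅b⁻¹, a⁻¹⁆` generates `Z`, and
`a ^ 3 = c ^ u`, `b ^ 3 = c ^ v` for some `u v : ZMod 3`. The words `a ^ i * b ^ j * c ^ k` with
`i, j, k < 3` then multiply as in an explicit model `Model27 u v`, and the resulting map onto `G`
is an isomorphism since `a` and `b` lie in no proper (hence abelian) subgroup. Terraces of every
kind transport along isomorphisms, and each of the nine models carries a narcissistic and a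
directed half-and-half terrace that is checked by evaluation.
-/

open Subgroup
open scoped commutatorElement

section Decidable

variable {G : Type*} [Group G] [DecidableEq G]

theorem isTerrace_iff_of_decidableEq (l : List G) :
    IsTerrace l ↔ IsArrangement l ∧
      (∀ z : G, z ≠ 1 → z ^ 2 = 1 → (succQuots l).count z = 1) ∧
      (∀ x : G, x ^ 2 ≠ 1 → (succQuots l).count x + (succQuots l).count x⁻¹ = 2) := by
  unfold IsTerrace; convert Iff.rfl

theorem isHalfAndHalfTerrace_iff_of_decidableEq (l : List G) :
    IsHalfAndHalfTerrace l ↔ IsTerrace l ∧ ∀ x : G, x ^ 2 ≠ 1 →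
      ((succQuots l).take ((l.length - 1) / 2)).count x +
        ((succQuots l).take ((l.length - 1) / 2)).count x⁻¹ = 1 := by
  unfold IsHalfAndHalfTerrace; convert Iff.rfl

variable [Fintype G] (l : List G)

instance : Decidable (IsArrangement l) := inferInstanceAs (Decidable (l.Nodup ∧ ∀ g, g ∈ l))

instance : Decidable (IsTerrace l) := decidable_of_iff _ (isTerrace_iff_of_decidableEq l).symm

instance : Decidable (IsHalfAndHalfTerrace l) :=
  decidable_of_iff _ (isHalfAndHalfTerrace_iff_of_decidableEq l).symm

instance : Decidable (IsNarcissisticTerrace l) :=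
  inferInstanceAs (Decidable (IsTerrace l ∧ _))

instance : Decidable (IsDirectedHalfAndHalfTerrace l) :=
  inferInstanceAs (Decidable (IsHalfAndHalfTerrace l ∧ _))

end Decidable

section Map

theorem IsArrangement.map {α β : Type*} (e : α ≃ β) {l : List α} (h : IsArrangement l) :
    IsArrangement (l.map e) :=
  ⟨h.1.map e.injective, fun y => e.apply_symm_apply y ▸ List.mem_map_of_mem (h.2 _)⟩

variable {G H : Type*} [Group G] [Group H]

theorem succQuots_map {F : Type*} [FunLike F G H] [MonoidHomClass F G H] (f : F) (l : List G) :
    succQuots (l.map f) = (succQuots l).map f := by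
  simp only [succQuots, ← List.map_tail, List.zipWith_map, List.map_zipWith, map_mul, map_inv]

variable (e : G ≃* H) {l : List G}

open scoped Classical in
theorem IsTerrace.map (h : IsTerrace l) : IsTerrace (l.map e) := by
  obtain ⟨harr, hinv, hpair⟩ := h
  refine ⟨harr.map e.toEquiv, fun z hz1 hz2 => ?_, fun x hx => ?_⟩
  · obtain ⟨y, rfl⟩ := e.surjective z
    rw [succQuots_map, List.count_map_of_injective _ _ e.injective]
    exact hinv y (by simpa using hz1) (by simpa [← map_pow] using hz2)
  · obtain ⟨y, rfl⟩ := e.surjective x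
    rw [succQuots_map, ← map_inv, List.count_map_of_injective _ _ e.injective,
      List.count_map_of_injective _ _ e.injective]
    exact hpair y (by simpa [← map_pow] using hx)

open scoped Classical in
theorem IsHalfAndHalfTerrace.map (h : IsHalfAndHalfTerrace l) :
    IsHalfAndHalfTerrace (l.map e) := by
  refine ⟨h.1.map e, fun x hx => ?_⟩
  obtain ⟨y, rfl⟩ := e.surjective x
  rw [succQuots_map, List.length_map, ← List.map_take, ← map_inv,
    List.count_map_of_injective _ _ e.injective, List.count_map_of_injective _ _ e.injective]
  exact h.2 y (by simpa [← map_pow] using hx)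

theorem IsNarcissisticTerrace.map (h : IsNarcissisticTerrace l) :
    IsNarcissisticTerrace (l.map e) :=
  ⟨h.1.map e, by rw [succQuots_map, ← List.map_reverse, ← h.2]⟩

theorem IsDirectedHalfAndHalfTerrace.map (h : IsDirectedHalfAndHalfTerrace l) :
    IsDirectedHalfAndHalfTerrace (l.map e) :=
  ⟨h.1.map e, succQuots_map e l ▸ h.2.map e.injective⟩

end Map

theorem not_isCyclic_quotient_center {G : Type*} [Group G] {a b : G} (hab : ¬Commute a b) :
    ¬IsCyclic (G ⧸ center G) := fun _ =>
  hab (have := isMulCommutative_of_isCyclic_quotient_center_self G; mul_comm' a b)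

section PrimeCube

variable {p : ℕ} [hp : Fact p.Prime] {G : Type*} [Group G]

theorem isMulCommutative_of_card_dvd_prime_sq (hG : Nat.card G ∣ p ^ 2) :
    IsMulCommutative G := by
  obtain ⟨k, hk, hcard⟩ := (Nat.dvd_prime_pow hp.out).mp hG
  obtain hk1 | rfl : k ≤ 1 ∨ k = 2 := by omega
  · have : IsCyclic G :=
      isCyclic_of_card_dvd_prime (p := p) (hcard ▸ (pow_dvd_pow p hk1).trans (pow_one p).dvd)
    exact IsCyclic.isMulCommutative
  · exact IsPGroup.isMulCommutative_of_card_eq_prime_sq hcard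

theorem eq_top_of_not_commute_of_card_eq_prime_pow_three (hG : Nat.card G = p ^ 3)
    {H : Subgroup G} {a b : G} (ha : a ∈ H) (hb : b ∈ H) (hab : ¬Commute a b) : H = ⊤ := by
  have : Finite G := Nat.finite_of_card_ne_zero (by simp [hG, hp.out.ne_zero])
  obtain ⟨k, hk, hcard⟩ := (Nat.dvd_prime_pow hp.out).mp (hG ▸ H.card_subgroup_dvd_card)
  obtain rfl | hk2 : k = 3 ∨ k ≤ 2 := by omega
  · exact H.eq_top_of_card_eq (hcard.trans hG.symm)
  · have := isMulCommutative_of_card_dvd_prime_sq (hcard ▸ pow_dvd_pow p hk2)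
    exact absurd (Subtype.ext_iff.mp (mul_comm' (⟨a, ha⟩ : H) ⟨b, hb⟩)) hab

variable {a b : G}

theorem card_quotient_center_of_card_eq_prime_pow_three (hG : Nat.card G = p ^ 3)
    (hab : ¬Commute a b) : Nat.card (G ⧸ center G) = p ^ 2 := by
  obtain ⟨k, hk0, hZ⟩ := IsPGroup.card_center_eq_prime_pow hG (by norm_num)
  obtain ⟨m, -, hQ⟩ := (Nat.dvd_prime_pow hp.out).mp (hG ▸ (center G).card_quotient_dvd_card)
  have hmk : p ^ 3 = p ^ (m + k) := by
    rw [← hG, (center G).card_eq_card_quotient_mul_card_subgroup, hQ, hZ, pow_add]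
  have hm : m + k = 3 := (Nat.pow_right_injective hp.out.two_le hmk).symm
  obtain hm1 | rfl : m ≤ 1 ∨ m = 2 := by omega
  · exact absurd (isCyclic_of_card_dvd_prime (p := p)
      (hQ ▸ (pow_dvd_pow p hm1).trans (pow_one p).dvd)) (not_isCyclic_quotient_center hab)
  · exact hQ

theorem card_center_of_card_eq_prime_pow_three (hG : Nat.card G = p ^ 3)
    (hab : ¬Commute a b) : Nat.card (center G) = p := by
  have h := (center G).card_eq_card_quotient_mul_card_subgroup
  rw [hG, card_quotient_center_of_card_eq_prime_pow_three hG hab, pow_succ] at h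
  exact (Nat.eq_of_mul_eq_mul_left (pow_pos hp.out.pos 2) h).symm

theorem commutator_le_center_of_card_eq_prime_pow_three (hG : Nat.card G = p ^ 3)
    (hab : ¬Commute a b) : commutator G ≤ center G :=
  Normal.quotient_commutative_iff_commutator_le.mp <|
    IsPGroup.isMulCommutative_of_card_eq_prime_sq
      (card_quotient_center_of_card_eq_prime_pow_three hG hab)

theorem pow_mem_center_of_card_eq_prime_pow_three (hG : Nat.card G = p ^ 3)
    (hab : ¬Commute a b) (g : G) : g ^ p ∈ center G := by
  have hexp : Monoid.exponent (G ⧸ center G) = p :=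
    (not_isCyclic_iff_exponent_eq_prime hp.out
      (card_quotient_center_of_card_eq_prime_pow_three hG hab)).mp
      (not_isCyclic_quotient_center hab)
  rw [← QuotientGroup.eq_one_iff, QuotientGroup.mk_pow, ← hexp]
  exact Monoid.pow_exponent_eq_one _

end PrimeCube

section PowerRelations

variable {G : Type*} [Group G] {a b c : G}

theorem pow_mul_pow_of_mul_eq_mul_mul (hba : b * a = a * b * c) (hca : Commute c a)
    (hcb : Commute c b) (n m : ℕ) : b ^ n * a ^ m = a ^ m * b ^ n * c ^ (n * m) := by
  have hb : ∀ m : ℕ, b * a ^ m = a ^ m * b * c ^ m := by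
    intro m
    induction m with
    | zero => simp
    | succ m ih =>
      rw [pow_succ a, ← mul_assoc, ih, mul_assoc _ (c ^ m), (hca.pow_left m).eq, ← mul_assoc,
        mul_assoc (a ^ m), hba, pow_succ c]
      group
  induction n with
  | zero => simp
  | succ n ih =>
    calc b ^ (n + 1) * a ^ m = b ^ n * a ^ m * b * c ^ m := by
          rw [pow_succ, mul_assoc, hb]; simp only [mul_assoc]
      _ = a ^ m * b ^ n * (c ^ (n * m) * b) * c ^ m := by rw [ih]; simp only [mul_assoc]
      _ = a ^ m * b ^ (n + 1) * c ^ ((n + 1) * m) := by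
          rw [(hcb.pow_left _).eq]; simp only [add_mul, one_mul, pow_add, pow_one, mul_assoc]

theorem normalForm_mul_normalForm (hba : b * a = a * b * c) (hca : Commute c a)
    (hcb : Commute c b) (i j k i' j' k' : ℕ) :
    a ^ i * b ^ j * c ^ k * (a ^ i' * b ^ j' * c ^ k') =
      a ^ (i + i') * b ^ (j + j') * c ^ (k + k' + j * i') := by
  simp only [mul_assoc]
  rw [(hca.pow_pow k i').left_comm, (hcb.pow_pow k j').left_comm, ← mul_assoc (b ^ j),
    pow_mul_pow_of_mul_eq_mul_mul hba hca hcb]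
  simp only [mul_assoc]
  rw [(hcb.pow_pow (j * i') j').left_comm, ← pow_add, ← pow_add, pow_add a, pow_add b,
    add_comm (j * i')]
  simp only [mul_assoc]

theorem pow_val_natCast {N : ℕ} (hc : c ^ N = 1) (n : ℕ) : c ^ (n : ZMod N).val = c ^ n := by
  rw [ZMod.val_natCast, ← pow_eq_pow_mod n hc]

end PowerRelations

/-- `⟨i, j, k⟩` stands for `a ^ i * b ^ j * c ^ k` in a group generated by `a` and `b` with
`b * a = a * b * c`, `c` central, `c ^ 3 = 1`, `a ^ 3 = c ^ u` and `b ^ 3 = c ^ v`. -/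
@[ext]
structure Model27 (u v : ZMod 3) where
  i : ZMod 3
  j : ZMod 3
  k : ZMod 3
deriving DecidableEq, Fintype

namespace Model27

/-- The number of factors `a ^ 3` that appear when `a ^ x.val * a ^ y.val` is reduced. -/
def carry (x y : ZMod 3) : ℕ := (x.val + y.val) / 3

theorem val_add_val (x y : ZMod 3) : x.val + y.val = (x + y).val + 3 * carry x y := by
  rw [ZMod.val_add, carry, Nat.mod_add_div]

theorem carry_add_carry (x y z : ZMod 3) :
    (carry x y + carry (x + y) z : ZMod 3) = carry y z + carry x (y + z) := by
  revert x y z; decide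

theorem carry_zero_left (x : ZMod 3) : carry 0 x = 0 := by
  revert x; decide

variable {u v : ZMod 3}

instance : Mul (Model27 u v) :=
  ⟨fun x y => ⟨x.i + y.i, x.j + y.j,
    x.k + y.k + x.j * y.i + u * carry x.i y.i + v * carry x.j y.j⟩⟩

instance : One (Model27 u v) := ⟨⟨0, 0, 0⟩⟩

instance : Inv (Model27 u v) :=
  ⟨fun x => ⟨-x.i, -x.j, -x.k + x.j * x.i - u * carry (-x.i) x.i - v * carry (-x.j) x.j⟩⟩

theorem mul_def (x y : Model27 u v) : x * y =
    ⟨x.i + y.i, x.j + y.j, x.k + y.k + x.j * y.i + u * carry x.i y.i + v * carry x.j y.j⟩ := rfl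

theorem one_def : (1 : Model27 u v) = ⟨0, 0, 0⟩ := rfl

theorem inv_def (x : Model27 u v) :
    x⁻¹ = ⟨-x.i, -x.j, -x.k + x.j * x.i - u * carry (-x.i) x.i - v * carry (-x.j) x.j⟩ := rfl

instance : Group (Model27 u v) :=
  Group.ofLeftAxioms
    (fun x y z => by
      simp only [mul_def, mk.injEq]
      refine ⟨by ring, by ring, ?_⟩
      linear_combination u * carry_add_carry x.i y.i z.i + v * carry_add_carry x.j y.j z.j)
    (fun x => by ext <;> simp [mul_def, one_def, carry_zero_left])
    (fun x => by ext <;> simp only [mul_def, one_def, inv_def] <;> ring)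

theorem card_eq : Nat.card (Model27 u v) = 27 := by
  rw [Nat.card_eq_fintype_card]; rfl

variable {G : Type*} [Group G] {a b c : G}

def lift (hba : b * a = a * b * c) (hca : Commute c a) (hcb : Commute c b) (hc : c ^ 3 = 1)
    (ha : a ^ 3 = c ^ u.val) (hb : b ^ 3 = c ^ v.val) : Model27 u v →* G where
  toFun x := a ^ x.i.val * b ^ x.j.val * c ^ x.k.val
  map_one' := by simp [one_def]
  map_mul' := by
    rintro ⟨i, j, k⟩ ⟨i', j', k'⟩
    have hk : (k + k' + j * i' + u * carry i i' + v * carry j j' : ZMod 3) =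
        ((u.val * carry i i' + (v.val * carry j j' + (k.val + k'.val + j.val * i'.val)) : ℕ) :
          ZMod 3) := by
      push_cast [ZMod.natCast_val, ZMod.cast_id]; ring
    rw [normalForm_mul_normalForm hba hca hcb, val_add_val i, val_add_val j, pow_add, pow_add,
      pow_mul, pow_mul, ha, hb, ← pow_mul, ← pow_mul, mul_def]
    simp only [hk, pow_val_natCast hc, pow_add, mul_assoc]
    rw [(hcb.pow_pow _ _).left_comm]

theorem lift_bijective (hG : Nat.card G = 27) (hab : ¬Commute a b) (hba : b * a = a * b * c)
    (hca : Commute c a) (hcb : Commute c b) (hc : c ^ 3 = 1) (ha : a ^ 3 = c ^ u.val)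
    (hb : b ^ 3 = c ^ v.val) : Function.Bijective (lift hba hca hcb hc ha hb) := by
  have hsurj : Function.Surjective (lift hba hca hcb hc ha hb) := by
    rw [← MonoidHom.range_eq_top]
    refine eq_top_of_not_commute_of_card_eq_prime_pow_three (p := 3) hG
      ⟨⟨1, 0, 0⟩, ?_⟩ ⟨⟨0, 1, 0⟩, ?_⟩ hab <;> simp [lift, ZMod.val_one]
  exact hsurj.bijective_of_nat_card_le (by rw [card_eq, hG])

end Model27

theorem exists_mulEquiv_model27 {G : Type*} [Group G] (hG : Nat.card G = 27) {a b : G}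
    (hab : ¬Commute a b) : ∃ u v : ZMod 3, Nonempty (Model27 u v ≃* G) := by
  have hG3 : Nat.card G = 3 ^ 3 := hG
  set c := ⁅b⁻¹, a⁻¹⁆
  have hba : b * a = a * b * c := by simp only [c, commutatorElement_def]; group
  have hcZ : c ∈ center G := commutator_le_center_of_card_eq_prime_pow_three hG3 hab
    (commutator_mem_commutator (mem_top _) (mem_top _))
  have hc1 : c ≠ 1 := fun h => hab (by rw [h, mul_one] at hba; exact hba.symm)
  have hZ := card_center_of_card_eq_prime_pow_three hG3 hab
  have hc3 : c ^ 3 = 1 := orderOf_dvd_iff_pow_eq_one.mp (hZ ▸ (center G).orderOf_dvd_natCard hcZ)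
  have hpow (g : G) : ∃ n : ℕ, g ^ 3 = c ^ (n : ZMod 3).val := by
    obtain ⟨n, hn⟩ := mem_powers_of_prime_card hZ (g := ⟨c, hcZ⟩)
      (g' := ⟨g ^ 3, pow_mem_center_of_card_eq_prime_pow_three hG3 hab g⟩) (by simpa using hc1)
    exact ⟨n, by rw [pow_val_natCast hc3]; simpa using congrArg Subtype.val hn.symm⟩
  obtain ⟨m, ha⟩ := hpow a
  obtain ⟨n, hb⟩ := hpow b
  have hca : Commute c a := (mem_center_iff.mp hcZ a).symm
  have hcb : Commute c b := (mem_center_iff.mp hcZ b).symm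
  exact ⟨_, _, ⟨.ofBijective _ (Model27.lift_bijective hG hab hba hca hcb hc3 ha hb)⟩⟩

def narcissisticTerrace27 (u v : ZMod 3) : List (Model27 u v) :=
  if u = 0 then
    if v = 0 then
      [⟨0, 0, 0⟩, ⟨1, 1, 0⟩, ⟨0, 1, 2⟩, ⟨1, 1, 1⟩, ⟨2, 0, 0⟩, ⟨0, 2, 0⟩, ⟨1, 2, 1⟩,
       ⟨0, 1, 1⟩, ⟨0, 1, 0⟩, ⟨1, 2, 2⟩, ⟨2, 1, 0⟩, ⟨2, 2, 2⟩, ⟨2, 1, 1⟩, ⟨2, 2, 1⟩,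
       ⟨2, 0, 1⟩, ⟨2, 2, 0⟩, ⟨2, 0, 2⟩, ⟨0, 2, 1⟩, ⟨1, 0, 1⟩, ⟨1, 0, 0⟩, ⟨0, 2, 2⟩,
       ⟨1, 2, 0⟩, ⟨2, 1, 2⟩, ⟨0, 0, 1⟩, ⟨1, 0, 2⟩, ⟨0, 0, 2⟩, ⟨1, 1, 2⟩]
    else if v = 1 then
      [⟨0, 0, 0⟩, ⟨1, 0, 1⟩, ⟨0, 1, 1⟩, ⟨1, 2, 0⟩, ⟨1, 1, 1⟩, ⟨2, 2, 1⟩, ⟨0, 1, 0⟩,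
       ⟨0, 1, 2⟩, ⟨1, 1, 2⟩, ⟨0, 0, 2⟩, ⟨0, 2, 1⟩, ⟨2, 2, 2⟩, ⟨2, 1, 1⟩, ⟨1, 2, 1⟩,
       ⟨0, 0, 1⟩, ⟨0, 2, 2⟩, ⟨2, 2, 0⟩, ⟨2, 1, 0⟩, ⟨1, 0, 0⟩, ⟨2, 0, 2⟩, ⟨2, 0, 1⟩,
       ⟨0, 2, 0⟩, ⟨1, 0, 2⟩, ⟨1, 2, 2⟩, ⟨2, 0, 0⟩, ⟨1, 1, 0⟩, ⟨2, 1, 2⟩]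
    else
      [⟨0, 0, 0⟩, ⟨0, 2, 1⟩, ⟨1, 2, 2⟩, ⟨0, 1, 1⟩, ⟨2, 2, 2⟩, ⟨2, 2, 1⟩, ⟨2, 0, 1⟩,
       ⟨0, 2, 0⟩, ⟨1, 1, 1⟩, ⟨2, 1, 2⟩, ⟨1, 0, 1⟩, ⟨1, 2, 0⟩, ⟨0, 1, 0⟩, ⟨1, 1, 2⟩,
       ⟨2, 1, 1⟩, ⟨1, 0, 2⟩, ⟨1, 2, 1⟩, ⟨0, 1, 2⟩, ⟨1, 1, 0⟩, ⟨2, 0, 0⟩, ⟨0, 2, 2⟩,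
       ⟨0, 0, 2⟩, ⟨0, 0, 1⟩, ⟨2, 1, 0⟩, ⟨1, 0, 0⟩, ⟨2, 0, 2⟩, ⟨2, 2, 0⟩]
  else if u = 1 then
    if v = 0 then
      [⟨0, 0, 0⟩, ⟨2, 1, 0⟩, ⟨1, 2, 1⟩, ⟨2, 2, 0⟩, ⟨2, 2, 2⟩, ⟨1, 0, 0⟩, ⟨1, 1, 1⟩,
       ⟨1, 0, 2⟩, ⟨2, 1, 1⟩, ⟨0, 1, 1⟩, ⟨2, 0, 0⟩, ⟨0, 1, 2⟩, ⟨0, 2, 2⟩, ⟨1, 2, 0⟩,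
       ⟨2, 2, 1⟩, ⟨2, 0, 1⟩, ⟨0, 1, 0⟩, ⟨2, 0, 2⟩, ⟨0, 0, 1⟩, ⟨1, 1, 0⟩, ⟨1, 0, 1⟩,
       ⟨1, 1, 2⟩, ⟨0, 2, 1⟩, ⟨0, 2, 0⟩, ⟨1, 2, 2⟩, ⟨0, 0, 2⟩, ⟨2, 1, 2⟩]
    else if v = 1 then
      [⟨0, 0, 0⟩, ⟨2, 2, 0⟩, ⟨2, 2, 1⟩, ⟨1, 2, 2⟩, ⟨1, 1, 0⟩, ⟨1, 2, 0⟩, ⟨2, 1, 1⟩,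
       ⟨0, 2, 1⟩, ⟨2, 1, 2⟩, ⟨0, 0, 2⟩, ⟨0, 1, 0⟩, ⟨1, 0, 1⟩, ⟨2, 0, 0⟩, ⟨1, 0, 2⟩,
       ⟨0, 0, 1⟩, ⟨1, 0, 0⟩, ⟨2, 2, 2⟩, ⟨2, 0, 1⟩, ⟨0, 2, 2⟩, ⟨2, 1, 0⟩, ⟨0, 2, 0⟩,
       ⟨1, 1, 1⟩, ⟨1, 2, 1⟩, ⟨1, 1, 2⟩, ⟨0, 1, 1⟩, ⟨0, 1, 2⟩, ⟨2, 0, 2⟩]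
    else
      [⟨0, 0, 0⟩, ⟨2, 0, 1⟩, ⟨2, 2, 0⟩, ⟨1, 1, 1⟩, ⟨1, 2, 2⟩, ⟨1, 2, 1⟩, ⟨1, 0, 0⟩,
       ⟨2, 0, 2⟩, ⟨0, 1, 0⟩, ⟨2, 0, 0⟩, ⟨0, 2, 0⟩, ⟨1, 1, 2⟩, ⟨0, 1, 1⟩, ⟨2, 2, 2⟩,
       ⟨1, 0, 2⟩, ⟨0, 0, 2⟩, ⟨1, 2, 0⟩, ⟨2, 1, 0⟩, ⟨1, 0, 1⟩, ⟨2, 1, 1⟩, ⟨0, 1, 2⟩,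
       ⟨0, 2, 2⟩, ⟨0, 2, 1⟩, ⟨0, 0, 1⟩, ⟨2, 2, 1⟩, ⟨2, 1, 2⟩, ⟨1, 1, 0⟩]
  else
    if v = 0 then
      [⟨0, 0, 0⟩, ⟨2, 1, 1⟩, ⟨0, 1, 2⟩, ⟨2, 0, 1⟩, ⟨0, 1, 1⟩, ⟨0, 1, 0⟩, ⟨1, 0, 1⟩,
       ⟨0, 2, 2⟩, ⟨0, 0, 2⟩, ⟨1, 2, 0⟩, ⟨0, 2, 1⟩, ⟨1, 2, 2⟩, ⟨1, 1, 0⟩, ⟨1, 0, 2⟩,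
       ⟨1, 2, 1⟩, ⟨1, 1, 2⟩, ⟨2, 1, 2⟩, ⟨1, 1, 1⟩, ⟨2, 0, 0⟩, ⟨2, 1, 0⟩, ⟨1, 0, 0⟩,
       ⟨2, 2, 0⟩, ⟨2, 2, 2⟩, ⟨0, 0, 1⟩, ⟨2, 2, 1⟩, ⟨0, 2, 0⟩, ⟨2, 0, 2⟩]
    else if v = 1 then
      [⟨0, 0, 0⟩, ⟨0, 1, 1⟩, ⟨0, 1, 0⟩, ⟨2, 0, 0⟩, ⟨1, 1, 2⟩, ⟨0, 2, 1⟩, ⟨2, 2, 0⟩,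
       ⟨0, 2, 0⟩, ⟨2, 1, 0⟩, ⟨1, 1, 1⟩, ⟨0, 0, 2⟩, ⟨1, 2, 2⟩, ⟨1, 1, 0⟩, ⟨1, 2, 0⟩,
       ⟨1, 0, 1⟩, ⟨1, 2, 1⟩, ⟨2, 1, 1⟩, ⟨1, 0, 2⟩, ⟨0, 0, 1⟩, ⟨2, 2, 2⟩, ⟨0, 2, 2⟩,
       ⟨2, 2, 1⟩, ⟨1, 0, 0⟩, ⟨0, 1, 2⟩, ⟨2, 0, 2⟩, ⟨2, 0, 1⟩, ⟨2, 1, 2⟩]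
    else
      [⟨0, 0, 0⟩, ⟨2, 1, 0⟩, ⟨2, 2, 0⟩, ⟨2, 2, 2⟩, ⟨1, 1, 2⟩, ⟨1, 2, 0⟩, ⟨0, 2, 2⟩,
       ⟨1, 2, 2⟩, ⟨2, 0, 0⟩, ⟨1, 2, 1⟩, ⟨0, 0, 2⟩, ⟨1, 0, 2⟩, ⟨1, 1, 1⟩, ⟨2, 0, 1⟩,
       ⟨0, 2, 0⟩, ⟨0, 0, 1⟩, ⟨1, 0, 1⟩, ⟨0, 1, 2⟩, ⟨2, 0, 2⟩, ⟨0, 1, 1⟩, ⟨1, 1, 0⟩,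
       ⟨0, 1, 0⟩, ⟨0, 2, 1⟩, ⟨2, 1, 2⟩, ⟨2, 1, 1⟩, ⟨2, 2, 1⟩, ⟨1, 0, 0⟩]

def directedTerrace27 (u v : ZMod 3) : List (Model27 u v) :=
  if u = 0 then
    if v = 0 then
      [⟨0, 0, 0⟩, ⟨2, 0, 0⟩, ⟨1, 1, 0⟩, ⟨2, 2, 2⟩, ⟨1, 2, 2⟩, ⟨2, 1, 1⟩, ⟨0, 2, 2⟩,
       ⟨0, 2, 1⟩, ⟨0, 0, 1⟩, ⟨2, 1, 2⟩, ⟨2, 0, 1⟩, ⟨1, 2, 0⟩, ⟨1, 1, 1⟩, ⟨0, 1, 1⟩,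
       ⟨0, 2, 0⟩, ⟨1, 0, 1⟩, ⟨1, 2, 1⟩, ⟨2, 2, 0⟩, ⟨1, 0, 0⟩, ⟨2, 0, 2⟩, ⟨2, 1, 0⟩,
       ⟨0, 1, 2⟩, ⟨0, 1, 0⟩, ⟨1, 0, 2⟩, ⟨2, 2, 1⟩, ⟨1, 1, 2⟩, ⟨0, 0, 2⟩]
    else if v = 1 then
      [⟨0, 0, 0⟩, ⟨2, 1, 1⟩, ⟨2, 2, 1⟩, ⟨2, 0, 0⟩, ⟨1, 1, 0⟩, ⟨2, 1, 0⟩, ⟨1, 2, 1⟩,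
       ⟨0, 2, 2⟩, ⟨1, 2, 2⟩, ⟨2, 0, 1⟩, ⟨0, 1, 2⟩, ⟨0, 1, 0⟩, ⟨0, 0, 1⟩, ⟨1, 1, 1⟩,
       ⟨1, 0, 0⟩, ⟨1, 0, 2⟩, ⟨2, 2, 2⟩, ⟨0, 2, 1⟩, ⟨0, 1, 1⟩, ⟨0, 2, 0⟩, ⟨2, 2, 0⟩,
       ⟨1, 1, 2⟩, ⟨2, 0, 2⟩, ⟨1, 2, 0⟩, ⟨2, 1, 2⟩, ⟨1, 0, 1⟩, ⟨0, 0, 2⟩]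
    else
      [⟨0, 0, 0⟩, ⟨2, 2, 2⟩, ⟨0, 1, 1⟩, ⟨1, 2, 0⟩, ⟨0, 2, 2⟩, ⟨1, 2, 1⟩, ⟨0, 2, 1⟩,
       ⟨1, 0, 1⟩, ⟨0, 1, 2⟩, ⟨0, 0, 2⟩, ⟨0, 1, 0⟩, ⟨1, 0, 0⟩, ⟨1, 1, 2⟩, ⟨1, 1, 1⟩,
       ⟨2, 1, 1⟩, ⟨2, 0, 2⟩, ⟨1, 0, 2⟩, ⟨2, 2, 1⟩, ⟨2, 1, 0⟩, ⟨2, 2, 0⟩, ⟨1, 1, 0⟩,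
       ⟨2, 1, 2⟩, ⟨0, 2, 0⟩, ⟨2, 0, 0⟩, ⟨2, 0, 1⟩, ⟨1, 2, 2⟩, ⟨0, 0, 1⟩]
  else if u = 1 then
    if v = 0 then
      [⟨0, 0, 0⟩, ⟨1, 2, 1⟩, ⟨2, 0, 2⟩, ⟨0, 2, 0⟩, ⟨2, 2, 0⟩, ⟨1, 2, 0⟩, ⟨0, 2, 2⟩,
       ⟨2, 1, 0⟩, ⟨2, 2, 1⟩, ⟨2, 1, 1⟩, ⟨2, 1, 2⟩, ⟨2, 0, 0⟩, ⟨1, 1, 0⟩, ⟨2, 2, 2⟩,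
       ⟨1, 0, 2⟩, ⟨1, 1, 1⟩, ⟨0, 0, 2⟩, ⟨1, 0, 1⟩, ⟨0, 2, 1⟩, ⟨0, 1, 0⟩, ⟨1, 0, 0⟩,
       ⟨2, 0, 1⟩, ⟨0, 1, 2⟩, ⟨0, 1, 1⟩, ⟨1, 1, 2⟩, ⟨1, 2, 2⟩, ⟨0, 0, 1⟩]
    else if v = 1 then
      [⟨0, 0, 0⟩, ⟨1, 2, 1⟩, ⟨1, 2, 0⟩, ⟨2, 1, 2⟩, ⟨2, 2, 2⟩, ⟨1, 1, 2⟩, ⟨0, 1, 2⟩,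
       ⟨0, 2, 0⟩, ⟨2, 0, 2⟩, ⟨1, 0, 1⟩, ⟨0, 2, 1⟩, ⟨1, 0, 2⟩, ⟨1, 2, 2⟩, ⟨2, 2, 1⟩,
       ⟨1, 0, 0⟩, ⟨2, 2, 0⟩, ⟨0, 0, 1⟩, ⟨0, 1, 0⟩, ⟨2, 1, 1⟩, ⟨0, 2, 2⟩, ⟨0, 1, 1⟩,
       ⟨1, 1, 1⟩, ⟨2, 1, 0⟩, ⟨2, 0, 0⟩, ⟨2, 0, 1⟩, ⟨1, 1, 0⟩, ⟨0, 0, 2⟩]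
    else
      [⟨0, 0, 0⟩, ⟨0, 2, 1⟩, ⟨0, 0, 2⟩, ⟨1, 2, 1⟩, ⟨1, 0, 1⟩, ⟨2, 0, 0⟩, ⟨1, 1, 2⟩,
       ⟨0, 1, 0⟩, ⟨2, 0, 1⟩, ⟨1, 2, 0⟩, ⟨1, 2, 2⟩, ⟨2, 0, 2⟩, ⟨1, 0, 2⟩, ⟨0, 1, 2⟩,
       ⟨2, 2, 1⟩, ⟨0, 2, 2⟩, ⟨1, 1, 1⟩, ⟨1, 0, 0⟩, ⟨1, 1, 0⟩, ⟨2, 2, 2⟩, ⟨2, 2, 0⟩,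
       ⟨2, 1, 1⟩, ⟨0, 2, 0⟩, ⟨2, 1, 2⟩, ⟨0, 1, 1⟩, ⟨2, 1, 0⟩, ⟨0, 0, 1⟩]
  else
    if v = 0 then
      [⟨0, 0, 0⟩, ⟨0, 0, 1⟩, ⟨0, 1, 2⟩, ⟨1, 1, 1⟩, ⟨0, 2, 0⟩, ⟨2, 0, 0⟩, ⟨0, 1, 0⟩,
       ⟨2, 2, 2⟩, ⟨2, 0, 2⟩, ⟨1, 2, 1⟩, ⟨0, 2, 2⟩, ⟨1, 2, 0⟩, ⟨1, 0, 2⟩, ⟨2, 1, 2⟩,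
       ⟨2, 1, 1⟩, ⟨2, 0, 1⟩, ⟨1, 0, 0⟩, ⟨2, 2, 1⟩, ⟨1, 1, 0⟩, ⟨2, 2, 0⟩, ⟨0, 1, 1⟩,
       ⟨1, 1, 2⟩, ⟨1, 0, 1⟩, ⟨1, 2, 2⟩, ⟨0, 2, 1⟩, ⟨2, 1, 0⟩, ⟨0, 0, 2⟩]
    else if v = 1 then
      [⟨0, 0, 0⟩, ⟨1, 1, 0⟩, ⟨1, 0, 1⟩, ⟨1, 1, 1⟩, ⟨2, 0, 2⟩, ⟨1, 1, 2⟩, ⟨1, 2, 0⟩,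
       ⟨0, 2, 0⟩, ⟨0, 2, 1⟩, ⟨2, 1, 0⟩, ⟨0, 1, 0⟩, ⟨2, 2, 1⟩, ⟨0, 0, 2⟩, ⟨2, 0, 1⟩,
       ⟨1, 2, 1⟩, ⟨2, 2, 2⟩, ⟨0, 1, 1⟩, ⟨2, 1, 1⟩, ⟨1, 2, 2⟩, ⟨2, 0, 0⟩, ⟨2, 1, 2⟩,
       ⟨1, 0, 0⟩, ⟨1, 0, 2⟩, ⟨2, 2, 0⟩, ⟨0, 2, 2⟩, ⟨0, 1, 2⟩, ⟨0, 0, 1⟩]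
    else
      [⟨0, 0, 0⟩, ⟨0, 0, 1⟩, ⟨1, 0, 0⟩, ⟨1, 2, 1⟩, ⟨1, 0, 2⟩, ⟨2, 1, 0⟩, ⟨1, 1, 2⟩,
       ⟨1, 0, 1⟩, ⟨2, 2, 2⟩, ⟨0, 1, 2⟩, ⟨2, 2, 0⟩, ⟨1, 2, 0⟩, ⟨0, 1, 0⟩, ⟨2, 0, 1⟩,
       ⟨1, 1, 0⟩, ⟨0, 2, 2⟩, ⟨2, 1, 1⟩, ⟨0, 1, 1⟩, ⟨2, 1, 2⟩, ⟨0, 2, 1⟩, ⟨1, 1, 1⟩,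
       ⟨1, 2, 2⟩, ⟨2, 0, 0⟩, ⟨2, 0, 2⟩, ⟨2, 2, 1⟩, ⟨0, 2, 0⟩, ⟨0, 0, 2⟩]

theorem isNarcissisticTerrace_narcissisticTerrace27 (u v : ZMod 3) :
    IsNarcissisticTerrace (narcissisticTerrace27 u v) := by
  revert u v; decide

theorem isDirectedHalfAndHalfTerrace_directedTerrace27 (u v : ZMod 3) :
    IsDirectedHalfAndHalfTerrace (directedTerrace27 u v) := by
  revert u v; decide

/-- Every non-abelian group of order 27 has both a narcissistic terrace and a directed
half-and-half terrace. -/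
theorem stmt_18 (G : Type*) [Group G] (hcard : Nat.card G = 27)
    (hnonab : ∃ a b : G, a * b ≠ b * a) :
    (∃ l : List G, IsNarcissisticTerrace l) ∧
    (∃ l : List G, IsDirectedHalfAndHalfTerrace l) := by
  obtain ⟨a, b, hab⟩ := hnonab
  obtain ⟨u, v, ⟨e⟩⟩ := exists_mulEquiv_model27 hcard hab
  exact ⟨⟨_, (isNarcissisticTerrace_narcissisticTerrace27 u v).map e⟩,
    ⟨_, (isDirectedHalfAndHalfTerrace_directedTerrace27 u v).map e⟩⟩
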